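/- arXiv:math/0607492 — 4 statements merged into one kernel-verified Lean document; each statement's English description precedes it below -/
import Mathlib

section
/- In the polynomial ring ℤ[h,s], the element h¹⁷ lies in the ideal generated by 3hs² − 6h⁵s + 2h⁹ and s³ − 12h⁸s + 5h¹². -/
open MvPolynomial

theorem h_pow_17_mem_cayley_ideal :
    let h : MvPolynomial (Fin 2) ℤ := X 0
    let s : MvPolynomial (Fin 2) ℤ := X 1
    h ^ 17 ∈ Ideal.span ({3 * h * s ^ 2 - 6 * h ^ 5 * s + 2 * h ^ 9,
                          s ^ 3 - 12 * h ^ 8 * s + 5 * h ^ 12} :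
        Set (MvPolynomial (Fin 2) ℤ)) := by
  intro h s
  rw [Ideal.mem_span_pair]
  exact ⟨78 * s ^ 2 + 33 * h ^ 4 * s - 922 * h ^ 8,
         -234 * h * s + 369 * h ^ 5, by ring⟩
end

section
/- Every homogeneous element of degree 17 (with deg h = 1, deg s = 4) in ℤ[h,s] lies in the ideal generated by 3hs² − 6h⁵s + 2h⁹ and s³ − 12h⁸s + 5h¹²; equivalently, the degree-17 graded component of ℤ[h,s]/(3hs² − 6h⁵s + 2h⁹, s³ − 12h⁸s + 5h¹²) is zero. -/
/-!
The five degree-17 monomials `h¹⁷, h¹³s, h⁹s², h⁵s³, hs⁴` are tied together by the five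
degree-17 multiples `h⁸r₁, h⁴s r₁, s²r₁, h⁵r₂, hs r₂` of the relations `r₁` (degree 9) and
`r₂` (degree 12). Their coefficient matrix has determinant `-1`, so it is invertible over `ℤ`,
and each monomial is an integral combination of these multiples.
-/

open MvPolynomial

namespace MvPolynomial

variable {R σ M : Type*} [CommSemiring R] [AddCommMonoid M]

theorem IsWeightedHomogeneous.mem_ideal_of_monomial_mem {I : Ideal (MvPolynomial σ R)}
    {w : σ → M} {n : M} {p : MvPolynomial σ R} (hp : p.IsWeightedHomogeneous w n)
    (h : ∀ m : σ →₀ ℕ, Finsupp.weight w m = n → monomial m (1 : R) ∈ I) : p ∈ I := by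
  rw [p.as_sum]
  refine Ideal.sum_mem _ fun m hm => ?_
  rw [← mul_one (p.coeff m), ← smul_eq_mul, ← smul_monomial, smul_eq_C_mul]
  exact I.mul_mem_left _ (h m (hp (mem_support_iff.mp hm)))

theorem monomial_one_fin_two (m : Fin 2 →₀ ℕ) :
    monomial m (1 : R) = X 0 ^ m 0 * X 1 ^ m 1 := by
  rw [monomial_eq, C_1, one_mul, Finsupp.prod_fintype _ _ fun _ => pow_zero _,
    Fin.prod_univ_two]

end MvPolynomial

theorem Finsupp.weight_fin_two_apply (a b : ℕ) (m : Fin 2 →₀ ℕ) :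
    Finsupp.weight ![a, b] m = a * m 0 + b * m 1 := by
  simp [Finsupp.weight_apply, Finsupp.sum_fintype, Fin.sum_univ_two, mul_comm]

noncomputable abbrev cayleyChowIdeal : Ideal (MvPolynomial (Fin 2) ℤ) :=
  Ideal.span {3 * X 0 * X 1 ^ 2 - 6 * X 0 ^ 5 * X 1 + 2 * X 0 ^ 9,
    X 1 ^ 3 - 12 * X 0 ^ 8 * X 1 + 5 * X 0 ^ 12}

theorem X_zero_pow_mul_X_one_pow_mem_cayleyChowIdeal {a b : ℕ} (h : a + 4 * b = 17) :
    X 0 ^ a * X 1 ^ b ∈ cayleyChowIdeal := by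
  rw [Ideal.mem_span_pair]
  obtain ⟨rfl, rfl⟩ | ⟨rfl, rfl⟩ | ⟨rfl, rfl⟩ | ⟨rfl, rfl⟩ | ⟨rfl, rfl⟩ :
      a = 17 ∧ b = 0 ∨ a = 13 ∧ b = 1 ∨ a = 9 ∧ b = 2 ∨ a = 5 ∧ b = 3 ∨ a = 1 ∧ b = 4 := by
    omega
  · exact ⟨-922 * X 0 ^ 8 + 33 * X 0 ^ 4 * X 1 + 78 * X 1 ^ 2,
      369 * X 0 ^ 5 - 234 * X 0 * X 1, by ring⟩
  · exact ⟨-390 * X 0 ^ 8 + 14 * X 0 ^ 4 * X 1 + 33 * X 1 ^ 2,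
      156 * X 0 ^ 5 - 99 * X 0 * X 1, by ring⟩
  · exact ⟨-165 * X 0 ^ 8 + 6 * X 0 ^ 4 * X 1 + 14 * X 1 ^ 2,
      66 * X 0 ^ 5 - 42 * X 0 * X 1, by ring⟩
  · exact ⟨-70 * X 0 ^ 8 + 3 * X 0 ^ 4 * X 1 + 6 * X 1 ^ 2,
      28 * X 0 ^ 5 - 18 * X 0 * X 1, by ring⟩
  · exact ⟨-30 * X 0 ^ 8 + 2 * X 0 ^ 4 * X 1 + 3 * X 1 ^ 2,
      12 * X 0 ^ 5 - 8 * X 0 * X 1, by ring⟩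

/-- Every element of `ℤ[h,s]` that is homogeneous of degree 17 for the grading
`deg h = 1`, `deg s = 4` lies in the ideal `(3hs² − 6h⁵s + 2h⁹, s³ − 12h⁸s + 5h¹²)`;
i.e. the degree-17 graded piece of the Chow ring of the Cayley plane vanishes. -/
theorem cayleyChow_degree_17_vanishes
    (p : MvPolynomial (Fin 2) ℤ)
    (hp : p.IsWeightedHomogeneous (![1, 4] : Fin 2 → ℕ) 17) :
    p ∈ Ideal.span ({3 * X 0 * X 1 ^ 2 - 6 * X 0 ^ 5 * X 1 + 2 * X 0 ^ 9,
                     X 1 ^ 3 - 12 * X 0 ^ 8 * X 1 + 5 * X 0 ^ 12} :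
        Set (MvPolynomial (Fin 2) ℤ)) := by
  refine hp.mem_ideal_of_monomial_mem fun m hm => ?_
  rw [Finsupp.weight_fin_two_apply, one_mul] at hm
  rw [monomial_one_fin_two]
  exact X_zero_pow_mul_X_one_pow_mem_cayleyChowIdeal hm
end

section
/- The quotient ℤ-module ℤ⁴ / span{(1238,−18,−358,1), (−1312,52,−1,0), (5586,−221,0,0)} is a free ℤ-module. -/
/-!
The functional `221 x₀ + 5586 x₁ + 520 x₂ + 13110 x₃` has as coefficients the maximal minors of
the relation matrix (up to a common sign), so it kills every relation. The minors are coprime, so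
it is onto `ℤ`, and back-substitution shows that its kernel is exactly the span of the relations.
Hence the quotient is isomorphic to `ℤ`.
-/

open Matrix

theorem Module.Free.quotient_of_eq_ker {R M F : Type*} [Ring R] [AddCommGroup M] [Module R M]
    [AddCommGroup F] [Module R F] [Module.Free R F] {N : Submodule R M} {f : M →ₗ[R] F}
    (hf : Function.Surjective f) (hN : N = LinearMap.ker f) : Module.Free R (M ⧸ N) := by
  subst hN
  exact Module.Free.of_equiv (f.quotKerEquivOfSurjective hf).symm

theorem LinearMap.surjective_of_apply_eq_one {R M : Type*} [Semiring R] [AddCommMonoid M]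
    [Module R M] (f : M →ₗ[R] R) {v : M} (hv : f v = 1) : Function.Surjective f :=
  fun r => ⟨r • v, by rw [map_smul, hv, smul_eq_mul, mul_one]⟩

def minorsFunctional : (Fin 4 → ℤ) →ₗ[ℤ] ℤ :=
  dotProductBilin ℤ ℤ ![221, 5586, 520, 13110]

theorem minorsFunctional_apply (x : Fin 4 → ℤ) :
    minorsFunctional x = 221 * x 0 + 5586 * x 1 + 520 * x 2 + 13110 * x 3 := by
  simp [minorsFunctional, dotProduct, Fin.sum_univ_four]

theorem minorsFunctional_surjective : Function.Surjective minorsFunctional :=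
  minorsFunctional.surjective_of_apply_eq_one (v := ![-733, 29, 0, 0]) <| by
    rw [minorsFunctional_apply]; rfl

theorem span_relations_eq_ker_minorsFunctional :
    Submodule.span ℤ
        ({![1238, -18, -358, 1], ![-1312, 52, -1, 0], ![5586, -221, 0, 0]} :
          Set (Fin 4 → ℤ)) = LinearMap.ker minorsFunctional := by
  apply le_antisymm
  · rw [Submodule.span_le]
    rintro v (rfl | rfl | rfl) <;>
      rw [SetLike.mem_coe, LinearMap.mem_ker, minorsFunctional_apply] <;> rfl
  · intro x hx
    rw [LinearMap.mem_ker, minorsFunctional_apply] at hx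
    rw [Submodule.mem_span_triple]
    -- Back-substitution: the relations are triangular in the last two coordinates,
    -- and `29 * 5586 - 733 * 221 = 1` solves the remaining two.
    refine ⟨x 3, -(x 2 + 358 * x 3),
      29 * (x 0 - 1312 * x 2 - 470934 * x 3) + 733 * (x 1 + 52 * x 2 + 18634 * x 3), ?_⟩
    ext i
    fin_cases i <;> simp <;> linarith

/-- `ℤ⁴ / span{(1238,−18,−358,1), (−1312,52,−1,0), (5586,−221,0,0)}` is a free `ℤ`-module. -/
theorem freudenthal_degree23_cokernel_free :
    Module.Free ℤ ((Fin 4 → ℤ) ⧸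
      Submodule.span ℤ
        ({![1238, -18, -358, 1], ![-1312, 52, -1, 0], ![5586, -221, 0, 0]} :
          Set (Fin 4 → ℤ))) :=
  Module.Free.quotient_of_eq_ker minorsFunctional_surjective span_relations_eq_ker_minorsFunctional
end

section
/- In the polynomial ring ℤ[h,s,t], the element h²⁸ lies in the ideal generated by s² − 10sh⁵ + 2th + 4h¹⁰, 2st − 12sh⁹ + 2th⁵ + 5h¹⁴, and t² + 922sh¹³ − 198th⁹ − 385h¹⁸. -/
open MvPolynomial

/-- `h²⁸` lies in the defining ideal of the Chow ring of the Freudenthal variety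
`E₇/P₇` in `ℤ[h,s,t]`, with `h = X 0`, `s = X 1`, `t = X 2`. -/
theorem h_pow_28_mem_freudenthal_ideal :
    let h : MvPolynomial (Fin 3) ℤ := X 0
    let s : MvPolynomial (Fin 3) ℤ := X 1
    let t : MvPolynomial (Fin 3) ℤ := X 2
    h ^ 28 ∈ Ideal.span ({s ^ 2 - 10 * s * h ^ 5 + 2 * t * h + 4 * h ^ 10,
                          2 * s * t - 12 * s * h ^ 9 + 2 * t * h ^ 5 + 5 * h ^ 14,
                          t ^ 2 + 922 * s * h ^ 13 - 198 * t * h ^ 9 - 385 * h ^ 18} :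
        Set (MvPolynomial (Fin 3) ℤ)) := by
  intro h s t
  have m1 : (s ^ 2 - 10 * s * h ^ 5 + 2 * t * h + 4 * h ^ 10) ∈
      Ideal.span ({s ^ 2 - 10 * s * h ^ 5 + 2 * t * h + 4 * h ^ 10,
                   2 * s * t - 12 * s * h ^ 9 + 2 * t * h ^ 5 + 5 * h ^ 14,
                   t ^ 2 + 922 * s * h ^ 13 - 198 * t * h ^ 9 - 385 * h ^ 18} :
        Set (MvPolynomial (Fin 3) ℤ)) := Ideal.subset_span (by simp)
  have m2 : (2 * s * t - 12 * s * h ^ 9 + 2 * t * h ^ 5 + 5 * h ^ 14) ∈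
      Ideal.span ({s ^ 2 - 10 * s * h ^ 5 + 2 * t * h + 4 * h ^ 10,
                   2 * s * t - 12 * s * h ^ 9 + 2 * t * h ^ 5 + 5 * h ^ 14,
                   t ^ 2 + 922 * s * h ^ 13 - 198 * t * h ^ 9 - 385 * h ^ 18} :
        Set (MvPolynomial (Fin 3) ℤ)) := Ideal.subset_span (by simp)
  have m3 : (t ^ 2 + 922 * s * h ^ 13 - 198 * t * h ^ 9 - 385 * h ^ 18) ∈
      Ideal.span ({s ^ 2 - 10 * s * h ^ 5 + 2 * t * h + 4 * h ^ 10,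
                   2 * s * t - 12 * s * h ^ 9 + 2 * t * h ^ 5 + 5 * h ^ 14,
                   t ^ 2 + 922 * s * h ^ 13 - 198 * t * h ^ 9 - 385 * h ^ 18} :
        Set (MvPolynomial (Fin 3) ℤ)) := Ideal.subset_span (by simp)
  have key : h ^ 28 =
      (-7076181 * h ^ 18 + 24927924 * s * h ^ 13 + 30766 * t * h ^ 9
        - 125514 * s * t * h ^ 4) *
        (s ^ 2 - 10 * s * h ^ 5 + 2 * t * h + 4 * h ^ 10) +
      (922981 * h ^ 14 - 3222830 * s * h ^ 9 + 62757 * s ^ 2 * h ^ 4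
        + 13110 * s * t) *
        (2 * s * t - 12 * s * h ^ 9 + 2 * t * h ^ 5 + 5 * h ^ 14) +
      (-61532 * h ^ 10 + 224808 * s * h ^ 5 - 26220 * s ^ 2) *
        (t ^ 2 + 922 * s * h ^ 13 - 198 * t * h ^ 9 - 385 * h ^ 18) := by
    ring
  rw [key]
  exact add_mem (add_mem (Ideal.mul_mem_left _ _ m1) (Ideal.mul_mem_left _ _ m2))
    (Ideal.mul_mem_left _ _ m3)
end
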